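/- arXiv:2209.06364 — 2 statements merged into one kernel-verified Lean document; each statement's English description precedes it below -/
import Mathlib

section
/- Let G be a simple graph (possibly infinite) and let D be a natural number such that every vertex of G has degree at most D. Then G admits a proper edge colouring with D+1 colours. Consequently, the chromatic index χ'(G) satisfies Δ ≤ χ'(G) ≤ Δ+1, where Δ is the supremum of the vertex degrees of G. -/
/-- A proper edge colouring of a simple graph `G` with `n` colours: a map assigning to
each edge one of `n` colours so that distinct edges sharing a vertex get different colours. -/
def SimpleGraph.EdgeColorable {V : Type*} (G : SimpleGraph V) (n : ℕ) : Prop :=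
  ∃ C : Sym2 V → Fin n, ∀ e₁ ∈ G.edgeSet, ∀ e₂ ∈ G.edgeSet,
    e₁ ≠ e₂ → (∃ v, v ∈ e₁ ∧ v ∈ e₂) → C e₁ ≠ C e₂

/-!
For finitely many edges, induct on their number. Given a proper colouring of all edges but
`s(x, y)`, take a maximal fan `y = f 0, …, f k` of neighbours of `x` in which the colour of
`s(x, f (i + 1))` is missing at `f i`. Handing each fan edge the colour of the next one frees any
edge `s(x, f i)`, and an `α`/`β` Kempe swap then frees a common colour at both of its ends, for
otherwise three distinct vertices of degree at most one would lie on one `α`/`β` path.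
Infinite graphs follow by compactness: the line graph maps to the complete graph on `D + 1`
colours as soon as each of its finite subgraphs does.
-/

theorem Set.eq_or_eq_of_encard_le_two {α : Type*} {s : Set α} {a b c : α} (hs : s.encard ≤ 2)
    (ha : a ∈ s) (hb : b ∈ s) (hc : c ∈ s) (hab : a ≠ b) : c = a ∨ c = b := by
  by_contra! h
  have h3 : ({a, b, c} : Set α).encard = 3 :=
    Set.encard_eq_three.2 ⟨a, b, c, hab, h.1.symm, h.2.symm, rfl⟩
  have := h3 ▸ Set.encard_le_encard (Set.insert_subset ha (Set.insert_subset hb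
    (Set.singleton_subset_iff.2 hc)))
  exact absurd (this.trans hs) (by norm_num)

namespace SimpleGraph

variable {V : Type*} {G H : SimpleGraph V} {a b c x : V}

theorem Reachable.of_forall_adj_eq (hb : ∀ u, G.Adj x u → u = b)
    (hGH : ∀ u v, G.Adj u v → u ≠ x → v ≠ x → H.Adj u v) (hax : a ≠ x) (h : G.Reachable x a) :
    H.Reachable b a := by
  obtain ⟨p, hp⟩ := h.exists_isPath
  cases p with
  | nil => exact absurd rfl hax
  | cons hadj q =>
    obtain rfl := hb _ hadj
    have hxq := ((Walk.cons_isPath_iff hadj q).1 hp).2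
    refine ⟨q.transfer H fun e he => ?_⟩
    induction e using Sym2.ind with
    | _ u v =>
      exact hGH u v (q.adj_of_mem_edges he)
        (fun h => hxq (h ▸ q.fst_mem_support_of_mem_edges he))
        (fun h => hxq (h ▸ q.snd_mem_support_of_mem_edges he))

theorem Walk.IsPath.exists_adj_adj_of_mem_support {p : G.Walk a b} (hp : p.IsPath) {z : V}
    (hz : z ∈ p.support) (hza : z ≠ a) (hzb : z ≠ b) :
    ∃ u ∈ p.support, ∃ v ∈ p.support, u ≠ v ∧ G.Adj z u ∧ G.Adj z v := by
  obtain ⟨n, rfl, hn⟩ := Walk.mem_support_iff_exists_getVert.1 hz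
  have hn₀ : 0 < n := Nat.pos_of_ne_zero fun h => hza (h ▸ p.getVert_zero)
  have hn₁ : n < p.length := hn.lt_of_ne fun h => hzb (h ▸ p.getVert_length)
  refine ⟨_, p.getVert_mem_support (n - 1), _, p.getVert_mem_support (n + 1), fun h => ?_,
    (Nat.sub_add_cancel hn₀ ▸ p.adj_getVert_succ (by omega : n - 1 < p.length)).symm,
    p.adj_getVert_succ hn₁⟩
  have := hp.getVert_injOn (by simp; omega) (by simp; omega) h
  omega

theorem Walk.IsPath.mem_support_of_adj {p : G.Walk a b} (hp : p.IsPath)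
    (hdeg : ∀ v, (G.neighborSet v).encard ≤ 2) (ha : (G.neighborSet a).Subsingleton)
    (hb : (G.neighborSet b).Subsingleton) (hab : a ≠ b) {z z' : V} (hz : z ∈ p.support)
    (hzz' : G.Adj z z') : z' ∈ p.support := by
  have hp₀ : ¬ p.Nil := Walk.not_nil_of_ne hab
  by_cases hza : z = a
  · subst hza
    exact ha hzz' (p.adj_snd hp₀) ▸ p.getVert_mem_support _
  by_cases hzb : z = b
  · subst hzb
    exact hb hzz' (p.adj_penultimate hp₀).symm ▸ p.getVert_mem_support _
  obtain ⟨u, hu, v, hv, huv, hzu, hzv⟩ := hp.exists_adj_adj_of_mem_support hz hza hzb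
  rcases Set.eq_or_eq_of_encard_le_two (hdeg z) hzu hzv hzz' huv with rfl | rfl
  exacts [hu, hv]

theorem Reachable.eq_or_eq_or_eq_of_subsingleton_neighborSet
    (hdeg : ∀ v, (G.neighborSet v).encard ≤ 2) (ha : (G.neighborSet a).Subsingleton)
    (hb : (G.neighborSet b).Subsingleton) (hc : (G.neighborSet c).Subsingleton)
    (hab : G.Reachable a b) (hac : G.Reachable a c) : a = b ∨ a = c ∨ b = c := by
  by_contra! hne
  obtain ⟨p, hp⟩ := hab.exists_isPath
  have hclosed : ∀ {u v} (q : G.Walk u v), u ∈ p.support → v ∈ p.support := by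
    intro u v q
    induction q with
    | nil => exact id
    | cons h q ih => exact fun hu => ih (hp.mem_support_of_adj hdeg ha hb hne.1 hu h)
  obtain ⟨u, -, v, -, huv, hcu, hcv⟩ := hp.exists_adj_adj_of_mem_support
    (hclosed hac.some p.start_mem_support) hne.2.1.symm hne.2.2.symm
  exact huv (hc hcu hcv)

end SimpleGraph

namespace EdgeColoring

variable {V κ : Type*} {E F : Set (Sym2 V)} {C : Sym2 V → κ} {u v x y : V} {c : κ}

def IsProperOn (E : Set (Sym2 V)) (C : Sym2 V → κ) : Prop :=
  ∀ e₁ ∈ E, ∀ e₂ ∈ E, e₁ ≠ e₂ → (∃ v, v ∈ e₁ ∧ v ∈ e₂) → C e₁ ≠ C e₂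

def IsMissingAt (E : Set (Sym2 V)) (C : Sym2 V → κ) (v : V) (c : κ) : Prop :=
  ∀ e ∈ E, v ∈ e → C e ≠ c

theorem IsProperOn.mono (h : IsProperOn E C) (hFE : F ⊆ E) : IsProperOn F C :=
  fun e₁ he₁ e₂ he₂ => h e₁ (hFE he₁) e₂ (hFE he₂)

theorem IsMissingAt.mono (h : IsMissingAt E C v c) (hFE : F ⊆ E) : IsMissingAt F C v c :=
  fun e he => h e (hFE he)

theorem IsProperOn.eq_of_apply_eq (h : IsProperOn E C) {e₁ e₂ : Sym2 V} (he₁ : e₁ ∈ E)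
    (he₂ : e₂ ∈ E) (hv₁ : v ∈ e₁) (hv₂ : v ∈ e₂) (hC : C e₁ = C e₂) : e₁ = e₂ :=
  by_contra fun hne => h e₁ he₁ e₂ he₂ hne ⟨v, hv₁, hv₂⟩ hC

theorem exists_isMissingAt [Fintype κ] {G : SimpleGraph V} (hE : E ⊆ G.edgeSet)
    (hv : (G.neighborSet v).encard < Fintype.card κ) : ∃ c, IsMissingAt E C v c := by
  classical
  by_contra! hall
  have hsurj : Set.univ ⊆ C '' {e ∈ E | v ∈ e} := fun c _ => by
    obtain ⟨e, he, hve, hc⟩ : ∃ e ∈ E, v ∈ e ∧ C e = c := by simpa [IsMissingAt] using hall c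
    exact ⟨e, ⟨he, hve⟩, hc⟩
  have hinc : {e ∈ E | v ∈ e} ⊆ G.incidenceSet v := fun e he => ⟨hE he.1, he.2⟩
  have := calc (Fintype.card κ : ℕ∞) = (Set.univ : Set κ).encard := by simp
    _ ≤ (G.incidenceSet v).encard :=
      ((Set.encard_le_encard hsurj).trans (Set.encard_image_le C _)).trans
        (Set.encard_le_encard hinc)
    _ = (G.neighborSet v).encard := Set.encard_congr (G.incidenceSetEquivNeighborSet v)
  exact this.not_gt hv

theorem IsProperOn.update [DecidableEq V] (hC : IsProperOn (E \ {s(x, y)}) C)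
    (hx : IsMissingAt (E \ {s(x, y)}) C x c) (hy : IsMissingAt (E \ {s(x, y)}) C y c) :
    IsProperOn E (Function.update C s(x, y) c) := by
  have hnew : ∀ e ∈ E, e ≠ s(x, y) → ∀ w ∈ e, w ∈ s(x, y) → C e ≠ c := by
    rintro e he hne w hwe hw
    rcases Sym2.mem_iff.1 hw with rfl | rfl
    exacts [hx e ⟨he, hne⟩ hwe, hy e ⟨he, hne⟩ hwe]
  rintro e₁ he₁ e₂ he₂ hne ⟨w, hw₁, hw₂⟩
  by_cases h₁ : e₁ = s(x, y) <;> by_cases h₂ : e₂ = s(x, y)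
  · exact absurd (h₁.trans h₂.symm) hne
  · subst h₁
    simpa [Function.update_of_ne h₂] using (hnew e₂ he₂ h₂ w hw₂ hw₁).symm
  · subst h₂
    simpa [Function.update_of_ne h₁] using hnew e₁ he₁ h₁ w hw₁ hw₂
  · simpa [Function.update_of_ne h₁, Function.update_of_ne h₂] using
      hC e₁ ⟨he₁, h₁⟩ e₂ ⟨he₂, h₂⟩ hne ⟨w, hw₁, hw₂⟩

section Kempe

open SimpleGraph

variable (E C) (α β : κ)

def kempeGraph : SimpleGraph V := fromEdgeSet {e ∈ E | C e = α ∨ C e = β}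

variable {E C α β}

theorem kempeGraph_adj : (kempeGraph E C α β).Adj u v ↔
    (s(u, v) ∈ E ∧ (C s(u, v) = α ∨ C s(u, v) = β)) ∧ u ≠ v :=
  fromEdgeSet_adj _

theorem kempeGraph_reachable_of_mem {w : V} {e : Sym2 V} (he : e ∈ E) (hc : C e = α ∨ C e = β)
    (hu : u ∈ e) (hv : v ∈ e) (hwu : (kempeGraph E C α β).Reachable w u) :
    (kempeGraph E C α β).Reachable w v := by
  by_cases huv : u = v
  · exact huv ▸ hwu
  have he' : e = s(u, v) := (Sym2.mem_and_mem_iff huv).1 ⟨hu, hv⟩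
  exact hwu.trans (kempeGraph_adj.2 ⟨he' ▸ ⟨he, hc⟩, huv⟩).reachable

theorem IsProperOn.eq_of_kempeGraph_adj (hC : IsProperOn E C) {u₁ u₂ : V}
    (h₁ : (kempeGraph E C α β).Adj v u₁) (h₂ : s(v, u₂) ∈ E) (hc : C s(v, u₁) = C s(v, u₂)) :
    u₁ = u₂ :=
  Sym2.congr_right.1 <| hC.eq_of_apply_eq (kempeGraph_adj.1 h₁).1.1 h₂
    (Sym2.mem_mk_left _ _) (Sym2.mem_mk_left _ _) hc

theorem IsProperOn.eq_of_kempeGraph_adj_of_isMissingAt (hC : IsProperOn E C)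
    (hv : IsMissingAt E C v α) {b : V} (hb : s(v, b) ∈ E) (hbβ : C s(v, b) = β)
    (hu : (kempeGraph E C α β).Adj v u) : u = b := by
  obtain ⟨⟨hmem, hc⟩, -⟩ := kempeGraph_adj.1 hu
  exact hC.eq_of_kempeGraph_adj hu hb
    ((hc.resolve_left (hv _ hmem (Sym2.mem_mk_left _ _))).trans hbβ.symm)

theorem IsProperOn.subsingleton_neighborSet_kempeGraph (hC : IsProperOn E C)
    (hv : IsMissingAt E C v β) : ((kempeGraph E C α β).neighborSet v).Subsingleton := by
  have hα : ∀ {u}, (kempeGraph E C α β).Adj v u → C s(v, u) = α := fun hu =>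
    (kempeGraph_adj.1 hu).1.2.resolve_right (hv _ (kempeGraph_adj.1 hu).1.1 (Sym2.mem_mk_left _ _))
  intro u₁ hu₁ u₂ hu₂
  exact hC.eq_of_kempeGraph_adj hu₁ (kempeGraph_adj.1 hu₂).1.1 ((hα hu₁).trans (hα hu₂).symm)

theorem IsProperOn.encard_neighborSet_kempeGraph_le (hC : IsProperOn E C) :
    ((kempeGraph E C α β).neighborSet v).encard ≤ 2 := by
  have hone : ∀ γ, {u | (kempeGraph E C α β).Adj v u ∧ C s(v, u) = γ}.encard ≤ 1 :=
    fun γ => Set.encard_le_one_iff.2 fun u₁ u₂ h₁ h₂ =>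
      hC.eq_of_kempeGraph_adj h₁.1 (kempeGraph_adj.1 h₂.1).1.1 (h₁.2.trans h₂.2.symm)
  have hsub : (kempeGraph E C α β).neighborSet v ⊆
      {u | (kempeGraph E C α β).Adj v u ∧ C s(v, u) = α} ∪
        {u | (kempeGraph E C α β).Adj v u ∧ C s(v, u) = β} := fun u hu =>
    (kempeGraph_adj.1 hu).1.2.imp (⟨hu, ·⟩) (⟨hu, ·⟩)
  calc _ ≤ _ := Set.encard_le_encard hsub
    _ ≤ _ := Set.encard_union_le _ _
    _ ≤ 1 + 1 := add_le_add (hone α) (hone β)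
    _ = 2 := by norm_num

variable [DecidableEq κ] (E C α β) in
open Classical in
/-- `Equiv.swap α β` fixes every other colour, so only the `α`/`β` edges of the chain through `w`
change. -/
noncomputable def kempeSwap (w : V) (e : Sym2 V) : κ :=
  if e ∈ E ∧ ∃ u ∈ e, (kempeGraph E C α β).Reachable w u then Equiv.swap α β (C e) else C e

variable [DecidableEq κ] {w : V} {e : Sym2 V}

theorem kempeSwap_apply_of_reachable (he : e ∈ E) (hv : v ∈ e)
    (hwv : (kempeGraph E C α β).Reachable w v) : kempeSwap E C α β w e = Equiv.swap α β (C e) :=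
  if_pos ⟨he, v, hv, hwv⟩

theorem kempeSwap_apply_of_not_reachable (he : e ∈ E) (hv : v ∈ e)
    (hwv : ¬ (kempeGraph E C α β).Reachable w v) : kempeSwap E C α β w e = C e := by
  unfold kempeSwap
  split_ifs with h
  · obtain ⟨-, u, hu, hwu⟩ := h
    refine Equiv.swap_apply_of_ne_of_ne ?_ ?_ <;> intro hc <;>
      exact hwv (kempeGraph_reachable_of_mem he (by simp [hc]) hu hv hwu)
  · rfl

theorem IsProperOn.kempeSwap (hC : IsProperOn E C) : IsProperOn E (kempeSwap E C α β w) := by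
  rintro e₁ he₁ e₂ he₂ hne ⟨v, hv₁, hv₂⟩
  by_cases hwv : (kempeGraph E C α β).Reachable w v
  · rw [kempeSwap_apply_of_reachable he₁ hv₁ hwv, kempeSwap_apply_of_reachable he₂ hv₂ hwv]
    exact (Equiv.swap α β).injective.ne (hC e₁ he₁ e₂ he₂ hne ⟨v, hv₁, hv₂⟩)
  · rw [kempeSwap_apply_of_not_reachable he₁ hv₁ hwv, kempeSwap_apply_of_not_reachable he₂ hv₂ hwv]
    exact hC e₁ he₁ e₂ he₂ hne ⟨v, hv₁, hv₂⟩

theorem IsMissingAt.kempeSwap_of_not_reachable {γ : κ} (h : IsMissingAt E C v γ)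
    (hwv : ¬ (kempeGraph E C α β).Reachable w v) : IsMissingAt E (kempeSwap E C α β w) v γ :=
  fun e he hv => kempeSwap_apply_of_not_reachable he hv hwv ▸ h e he hv

theorem IsMissingAt.kempeSwap_of_reachable (h : IsMissingAt E C v β)
    (hwv : (kempeGraph E C α β).Reachable w v) : IsMissingAt E (kempeSwap E C α β w) v α := by
  intro e he hv hc
  rw [kempeSwap_apply_of_reachable he hv hwv, Equiv.swap_apply_eq_iff, Equiv.swap_apply_left] at hc
  exact h e he hv hc

/-- Kempe's argument: unless `x` lies on the `α`/`β` chain through `y`, swapping the colours on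
that chain frees `α` at both ends of `s(x, y)`. -/
theorem exists_isProperOn_of_not_reachable [DecidableEq V] (hC : IsProperOn (E \ {s(x, y)}) C)
    (hx : IsMissingAt (E \ {s(x, y)}) C x α) (hy : IsMissingAt (E \ {s(x, y)}) C y β)
    (hyx : ¬ (kempeGraph (E \ {s(x, y)}) C α β).Reachable y x) :
    ∃ C' : Sym2 V → κ, IsProperOn E C' :=
  ⟨_, (hC.kempeSwap (w := y)).update (hx.kempeSwap_of_not_reachable hyx)
    (hy.kempeSwap_of_reachable .rfl)⟩

end Kempe

section Fan

open SimpleGraph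

variable {G : SimpleGraph V} {f : ℕ → V} {i j k l : ℕ} {e : Sym2 V} {γ : κ}

structure IsFan (G : SimpleGraph V) (C : Sym2 V → κ) (x y : V) (f : ℕ → V) (k : ℕ) : Prop where
  apply_zero : f 0 = y
  adj : ∀ i ≤ k, G.Adj x (f i)
  injOn : Set.InjOn f (Set.Iic k)
  isMissingAt : ∀ i < k, IsMissingAt (G.edgeSet \ {s(x, y)}) C (f i) (C s(x, f (i + 1)))

theorem IsFan.mk_mem_edgeSet_diff (hF : IsFan G C x y f k) (hi : i ≤ k) (hi₀ : i ≠ 0) :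
    s(x, f i) ∈ G.edgeSet \ {s(x, y)} :=
  ⟨hF.adj i hi, fun h => hi₀ <| hF.injOn (Set.mem_Iic.2 hi) (Set.mem_Iic.2 (Nat.zero_le k))
    (by rw [hF.apply_zero]; exact Sym2.congr_right.1 h)⟩

theorem IsFan.notMem_mk (hF : IsFan G C x y f k) (hi : i ≤ k) (hl : l ≤ k) (hil : i ≠ l) :
    f i ∉ s(x, f l) := by
  rw [Sym2.mem_iff, not_or]
  exact ⟨(hF.adj i hi).ne', fun h => hil (hF.injOn (Set.mem_Iic.2 hi) (Set.mem_Iic.2 hl) h)⟩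

theorem IsFan.update (hF : IsFan G C x y f k) {z : V} (hz : G.Adj x z) (hzf : ∀ l ≤ k, f l ≠ z)
    (hzk : IsMissingAt (G.edgeSet \ {s(x, y)}) C (f k) (C s(x, z))) :
    IsFan G C x y (Function.update f (k + 1) z) (k + 1) where
  apply_zero := by rw [Function.update_of_ne k.succ_ne_zero.symm, hF.apply_zero]
  adj i hi := by
    rcases hi.lt_or_eq with hi | rfl
    · rw [Function.update_of_ne hi.ne]; exact hF.adj i (by omega)
    · rw [Function.update_self]; exact hz
  injOn i hi l hl h := by
    simp only [Set.mem_Iic] at hi hl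
    rcases hi.lt_or_eq with hi | rfl <;> rcases hl.lt_or_eq with hl | rfl
    · rw [Function.update_of_ne hi.ne, Function.update_of_ne hl.ne] at h
      exact hF.injOn (Set.mem_Iic.2 (by omega)) (Set.mem_Iic.2 (by omega)) h
    · rw [Function.update_of_ne hi.ne, Function.update_self] at h
      exact absurd h (hzf i (by omega))
    · rw [Function.update_of_ne hl.ne, Function.update_self] at h
      exact absurd h.symm (hzf l (by omega))
    · rfl
  isMissingAt i hi := by
    rcases (Nat.lt_succ_iff.1 hi).lt_or_eq with hi | rfl
    · rw [Function.update_of_ne (by omega), Function.update_of_ne (by omega)]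
      exact hF.isMissingAt i hi
    · rw [Function.update_of_ne (by omega), Function.update_self]
      exact hzk

theorem IsFan.add_one_le_encard (hF : IsFan G C x y f k) :
    (k + 1 : ℕ∞) ≤ (G.neighborSet x).encard :=
  calc (k + 1 : ℕ∞) = (Set.Iic k).encard := by
        rw [← Finset.coe_Iic, Set.encard_coe_eq_coe_finsetCard, Nat.card_Iic]; rfl
    _ = (f '' Set.Iic k).encard := hF.injOn.encard_image.symm
    _ ≤ (G.neighborSet x).encard :=
        Set.encard_le_encard (Set.image_subset_iff.2 fun i hi => hF.adj i hi)

theorem exists_isFan_forall_not_isFan (hxy : G.Adj x y) (hx : (G.neighborSet x).Finite) :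
    ∃ f k, IsFan G C x y f k ∧ ∀ f', ¬ IsFan G C x y f' (k + 1) := by
  classical
  have hbound : ∀ {f k}, IsFan G C x y f k → k + 1 ≤ (G.neighborSet x).ncard := fun hF => by
    have := hF.add_one_le_encard
    rwa [← hx.cast_ncard_eq, ← Nat.cast_one, ← Nat.cast_add, Nat.cast_le] at this
  have hfan₀ : IsFan G C x y (fun _ => y) 0 :=
    ⟨rfl, fun _ _ => hxy, fun i hi l hl _ => by
      simp only [Set.mem_Iic, Nat.le_zero] at hi hl; omega, fun i hi => absurd hi i.not_lt_zero⟩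
  let P k := ∃ f, IsFan G C x y f k
  obtain ⟨f, hF⟩ : P (Nat.findGreatest P (G.neighborSet x).ncard) :=
    Nat.findGreatest_spec (Nat.zero_le _) ⟨_, hfan₀⟩
  exact ⟨f, _, hF, fun f' hF' => Nat.findGreatest_is_greatest (P := P) (Nat.lt_succ_self _)
    (by have := hbound hF'; omega) ⟨f', hF'⟩⟩

variable [DecidableEq V]

def fanShift (C : Sym2 V → κ) (x : V) (f : ℕ → V) : ℕ → Sym2 V → κ
  | 0 => C
  | i + 1 => Function.update (fanShift C x f i) s(x, f i) (C s(x, f (i + 1)))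

theorem fanShift_apply_of_forall_ne (h : ∀ l < i, e ≠ s(x, f l)) : fanShift C x f i e = C e := by
  induction i with
  | zero => rfl
  | succ i ih =>
    rw [fanShift, Function.update_of_ne (h i i.lt_succ_self)]
    exact ih fun l hl => h l (hl.trans i.lt_succ_self)

theorem fanShift_apply_of_notMem (h : x ∉ e) : fanShift C x f i e = C e :=
  fanShift_apply_of_forall_ne fun l _ he => h (he ▸ Sym2.mem_mk_left x (f l))

theorem fanShift_apply_of_le (hf : Set.InjOn f (Set.Iic k)) (hj : j ≤ k) (hij : i ≤ j) :
    fanShift C x f i s(x, f j) = C s(x, f j) :=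
  fanShift_apply_of_forall_ne fun l hl he => by
    have := hf (Set.mem_Iic.2 hj) (Set.mem_Iic.2 (by omega)) (Sym2.congr_right.1 he)
    omega

theorem fanShift_apply_of_lt (hf : Set.InjOn f (Set.Iic k)) (hi : i ≤ k) (hl : l < i) :
    fanShift C x f i s(x, f l) = C s(x, f (l + 1)) := by
  induction i with
  | zero => omega
  | succ i ih =>
    rcases (Nat.lt_succ_iff.1 hl).lt_or_eq with hl | rfl
    · have hne : s(x, f l) ≠ s(x, f i) := fun he => by
        have := hf (Set.mem_Iic.2 (by omega)) (Set.mem_Iic.2 (by omega)) (Sym2.congr_right.1 he)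
        omega
      rw [fanShift, Function.update_of_ne hne, ih (by omega) hl]
    · exact Function.update_self ..

theorem IsFan.isMissingAt_fanShift_leaf (hF : IsFan G C x y f k) (hi : i ≤ k)
    (h : IsMissingAt (G.edgeSet \ {s(x, y)}) C (f i) γ) :
    IsMissingAt (G.edgeSet \ {s(x, f i)}) (fanShift C x f i) (f i) γ := by
  rintro e ⟨he, hne⟩ hv
  have hshift : ∀ l < i, e ≠ s(x, f l) := fun l hl h =>
    hF.notMem_mk hi (by omega) hl.ne' (h ▸ hv)
  have h₀ : e ≠ s(x, y) := by
    rw [← hF.apply_zero]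
    rcases Nat.eq_zero_or_pos i with rfl | hi₀
    exacts [hne, hshift 0 hi₀]
  rw [fanShift_apply_of_forall_ne hshift]
  exact h e ⟨he, h₀⟩ hv

theorem IsFan.isMissingAt_fanShift_center (hF : IsFan G C x y f k) (hi : i ≤ k)
    (h : IsMissingAt (G.edgeSet \ {s(x, y)}) C x γ) :
    IsMissingAt (G.edgeSet \ {s(x, f i)}) (fanShift C x f i) x γ := by
  induction i with
  | zero => rw [hF.apply_zero]; exact h
  | succ i ih =>
    rintro e ⟨he, hne⟩ hx
    by_cases hei : e = s(x, f i)
    · rw [hei, fanShift, Function.update_self]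
      exact h _ (hF.mk_mem_edgeSet_diff hi i.succ_ne_zero) (Sym2.mem_mk_left _ _)
    · rw [fanShift, Function.update_of_ne hei]
      exact ih (by omega) e ⟨he, hei⟩ hx

theorem IsFan.isProperOn_fanShift (hF : IsFan G C x y f k)
    (hC : IsProperOn (G.edgeSet \ {s(x, y)}) C) (hi : i ≤ k) :
    IsProperOn (G.edgeSet \ {s(x, f i)}) (fanShift C x f i) := by
  induction i with
  | zero => rw [hF.apply_zero]; exact hC
  | succ i ih =>
    have ih := ih (by omega)
    have hsub : (G.edgeSet \ {s(x, f (i + 1))}) \ {s(x, f i)} ⊆ G.edgeSet \ {s(x, f i)} :=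
      Set.sdiff_subset_sdiff_left Set.sdiff_subset
    have hmem : s(x, f (i + 1)) ∈ G.edgeSet \ {s(x, f i)} := ⟨hF.adj _ hi, fun h => by
      have := hF.injOn (Set.mem_Iic.2 hi) (Set.mem_Iic.2 (by omega)) (Sym2.congr_right.1 h)
      omega⟩
    have hcolour : fanShift C x f i s(x, f (i + 1)) = C s(x, f (i + 1)) :=
      fanShift_apply_of_le hF.injOn hi (by omega)
    refine (ih.mono hsub).update (fun e ⟨⟨he, hne⟩, hne'⟩ hx hc => hne ?_)
      ((hF.isMissingAt_fanShift_leaf (by omega) (hF.isMissingAt i hi)).mono hsub)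
    exact ih.eq_of_apply_eq ⟨he, hne'⟩ hmem hx (Sym2.mem_mk_left _ _) (hc.trans hcolour.symm)

theorem IsFan.reachable_kempeGraph [DecidableEq κ] (hF : IsFan G C x y f k)
    (hno : ∀ C' : Sym2 V → κ, ¬ IsProperOn G.edgeSet C')
    (hC : IsProperOn (G.edgeSet \ {s(x, y)}) C) (hi : i ≤ k) {α β : κ}
    (hα : IsMissingAt (G.edgeSet \ {s(x, y)}) C x α)
    (hβ : IsMissingAt (G.edgeSet \ {s(x, y)}) C (f i) β) {b : V}
    (hb : s(x, b) ∈ G.edgeSet \ {s(x, f i)}) (hbβ : fanShift C x f i s(x, b) = β) :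
    (kempeGraph {e ∈ G.edgeSet | x ∉ e} C α β).Reachable b (f i) := by
  have hCi := hF.isProperOn_fanShift hC hi
  have hαi := hF.isMissingAt_fanShift_center hi hα
  have hreach : (kempeGraph (G.edgeSet \ {s(x, f i)}) (fanShift C x f i) α β).Reachable (f i) x :=
    by_contra fun h => by
      obtain ⟨C', hC'⟩ := exists_isProperOn_of_not_reachable hCi hαi
        (hF.isMissingAt_fanShift_leaf hi hβ) h
      exact hno C' hC'
  refine hreach.symm.of_forall_adj_eq
    (fun _ hu => hCi.eq_of_kempeGraph_adj_of_isMissingAt hαi hb hbβ hu)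
    (fun u v huv hux hvx => ?_) (hF.adj i hi).ne'
  obtain ⟨⟨⟨he, -⟩, hc⟩, hne⟩ := kempeGraph_adj.1 huv
  have hx : x ∉ s(u, v) := by simp [Sym2.mem_iff, Ne.symm hux, Ne.symm hvx]
  rw [fanShift_apply_of_notMem hx] at hc
  exact kempeGraph_adj.2 ⟨⟨⟨he, hx⟩, hc⟩, hne⟩

theorem IsFan.exists_isProperOn_of_isMissingAt (hF : IsFan G C x y f k)
    (hC : IsProperOn (G.edgeSet \ {s(x, y)}) C) (hi : i ≤ k)
    (hx : IsMissingAt (G.edgeSet \ {s(x, y)}) C x γ)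
    (hfi : IsMissingAt (G.edgeSet \ {s(x, y)}) C (f i) γ) :
    ∃ C' : Sym2 V → κ, IsProperOn G.edgeSet C' :=
  ⟨_, (hF.isProperOn_fanShift hC hi).update (hF.isMissingAt_fanShift_center hi hx)
    (hF.isMissingAt_fanShift_leaf hi hfi)⟩

/-- If the colour `β` missing at the last leaf is that of the fan edge `s(x, f (i + 1))`, the
Kempe chains of the fans shifted to `f i` and to `f k` join `f i`, `f (i + 1)` and `f k` in the
`α`/`β` graph away from `x`, where all three have degree at most one. -/
theorem IsFan.exists_isProperOn_of_apply_eq [DecidableEq κ] (hF : IsFan G C x y f k)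
    (hC : IsProperOn (G.edgeSet \ {s(x, y)}) C) (hik : i + 1 < k) {α β : κ}
    (hα : IsMissingAt (G.edgeSet \ {s(x, y)}) C x α)
    (hβ : IsMissingAt (G.edgeSet \ {s(x, y)}) C (f k) β) (hce : C s(x, f (i + 1)) = β) :
    ∃ C' : Sym2 V → κ, IsProperOn G.edgeSet C' := by
  by_contra! hno
  have hinj : ∀ {l m}, l ≤ k → m ≤ k → l ≠ m → f l ≠ f m := fun hl hm hlm h =>
    hlm (hF.injOn (Set.mem_Iic.2 hl) (Set.mem_Iic.2 hm) h)
  have hmem : ∀ {l m}, l ≤ k → m ≤ k → l ≠ m → s(x, f l) ∈ G.edgeSet \ {s(x, f m)} :=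
    fun hl hm hlm => ⟨hF.adj _ hl, fun h => hinj hl hm hlm (Sym2.congr_right.1 h)⟩
  have hβi : IsMissingAt (G.edgeSet \ {s(x, y)}) C (f i) β := hce ▸ hF.isMissingAt i (by omega)
  have hreach₁ := hF.reachable_kempeGraph (i := i) hno hC (by omega) hα hβi
    (hmem (l := i + 1) (by omega) (by omega) (by omega))
    ((fanShift_apply_of_le hF.injOn hik.le (Nat.le_succ i)).trans hce)
  have hreach₂ := hF.reachable_kempeGraph hno hC le_rfl hα hβ
    (hmem (l := i) (by omega) le_rfl (by omega))
    ((fanShift_apply_of_lt hF.injOn le_rfl (by omega)).trans hce)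
  have hsub : {e ∈ G.edgeSet | x ∉ e} ⊆ G.edgeSet \ {s(x, y)} :=
    fun e he => ⟨he.1, fun h => he.2 (h ▸ Sym2.mem_mk_left _ _)⟩
  have hT := hC.mono hsub
  have hβi₁ : IsMissingAt {e ∈ G.edgeSet | x ∉ e} C (f (i + 1)) β := fun e he hv hc =>
    he.2 (hC.eq_of_apply_eq (hsub he) (hF.mk_mem_edgeSet_diff hik.le (by omega)) hv
      (Sym2.mem_mk_right _ _) (hc.trans hce.symm) ▸ Sym2.mem_mk_left _ _)
  rcases hreach₁.symm.eq_or_eq_or_eq_of_subsingleton_neighborSet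
    (fun _ => hT.encard_neighborSet_kempeGraph_le)
    (hT.subsingleton_neighborSet_kempeGraph (hβi.mono hsub))
    (hT.subsingleton_neighborSet_kempeGraph hβi₁)
    (hT.subsingleton_neighborSet_kempeGraph (hβ.mono hsub)) hreach₂ with h | h | h
  · exact hinj (by omega) (by omega) (by omega) h
  · exact hinj (by omega) le_rfl (by omega) h
  · exact hinj (by omega) le_rfl (by omega) h

/-- A maximal fan either ends at a leaf sharing a missing colour with `x`, or the colour missing
at its last leaf sits at `x` on one of its own edges. -/
theorem exists_isProperOn_of_isProperOn_diff [Fintype κ] [DecidableEq κ]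
    (hdeg : ∀ v, (G.neighborSet v).encard < Fintype.card κ) (hxy : G.Adj x y)
    (hC : IsProperOn (G.edgeSet \ {s(x, y)}) C) :
    ∃ C' : Sym2 V → κ, IsProperOn G.edgeSet C' := by
  obtain ⟨f, k, hF, hmax⟩ := exists_isFan_forall_not_isFan (C := C) hxy
    (Set.encard_lt_top_iff.1 ((hdeg x).trans (WithTop.coe_lt_top _)))
  obtain ⟨α, hα⟩ := exists_isMissingAt (C := C) Set.sdiff_subset (hdeg x)
  obtain ⟨β, hβ⟩ := exists_isMissingAt (C := C) Set.sdiff_subset (hdeg (f k))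
  by_cases hβx : IsMissingAt (G.edgeSet \ {s(x, y)}) C x β
  · exact hF.exists_isProperOn_of_isMissingAt hC le_rfl hβx hβ
  simp only [IsMissingAt, not_forall, not_not] at hβx
  obtain ⟨e, he, hxe, hce⟩ := hβx
  obtain ⟨z, rfl⟩ : ∃ z, e = s(x, z) := ⟨_, (Sym2.other_spec hxe).symm⟩
  obtain ⟨j, hj, rfl⟩ : ∃ j ≤ k, f j = z := by
    by_contra! hz
    exact hmax _ (hF.update he.1 hz (hce ▸ hβ))
  obtain ⟨i, rfl⟩ : ∃ i, j = i + 1 :=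
    Nat.exists_eq_succ_of_ne_zero fun h => he.2 (by rw [h, hF.apply_zero]; rfl)
  exact hF.exists_isProperOn_of_apply_eq hC
    (hj.lt_of_ne fun h => hβ _ he (h ▸ Sym2.mem_mk_right _ _) hce) hα hβ hce

end Fan

end EdgeColoring

namespace SimpleGraph

variable {V : Type*}

theorem edgeColorable_of_finite {G : SimpleGraph V} {D : ℕ} (hfin : G.edgeSet.Finite)
    (hdeg : ∀ v, (G.neighborSet v).encard ≤ D) : G.EdgeColorable (D + 1) := by
  classical
  induction h : G.edgeSet.ncard generalizing G with
  | zero =>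
    refine ⟨fun _ => 0, fun e he => ?_⟩
    exact absurd ((Set.ncard_eq_zero hfin).1 h ▸ he) (Set.notMem_empty e)
  | succ n ih =>
    obtain ⟨e, he⟩ := Set.nonempty_of_ncard_ne_zero (s := G.edgeSet) (by omega)
    induction e using Sym2.ind with
    | _ x y =>
    obtain ⟨C, hC⟩ := ih (G := G.deleteEdges {s(x, y)}) (hfin.subset (by simp))
      (fun v => (Set.encard_le_encard (neighborSet_mono (deleteEdges_le _) v)).trans (hdeg v))
      (by rw [edgeSet_deleteEdges, Set.ncard_sdiff_singleton_of_mem he, h]; rfl)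
    rw [edgeSet_deleteEdges] at hC
    exact EdgeColoring.exists_isProperOn_of_isProperOn_diff
      (fun v => (hdeg v).trans_lt (by rw [Fintype.card_fin]; exact_mod_cast D.lt_succ_self)) he hC

theorem EdgeColorable.of_forall_finite {G : SimpleGraph V} {n : ℕ}
    (h : ∀ H ≤ G, H.edgeSet.Finite → H.EdgeColorable n) : G.EdgeColorable n := by
  classical
  obtain ⟨C₀, -⟩ := h ⊥ bot_le (by simp)
  have hfin (L : G.lineGraph.Subgraph) (hL : L.verts.Finite) :
      Nonempty (L.coe →g (⊤ : SimpleGraph (Fin n))) := by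
    let H := fromEdgeSet (Subtype.val '' L.verts)
    have hmem (e : L.verts) : e.1.1 ∈ H.edgeSet := by
      rw [edgeSet_fromEdgeSet]
      exact ⟨⟨e.1, e.2, rfl⟩, G.not_isDiag_of_mem_edgeSet e.1.2⟩
    have hH : H ≤ G := (fromEdgeSet_le G).2 fun e he => by
      obtain ⟨e, -, rfl⟩ := he.1
      exact e.2
    obtain ⟨C, hC⟩ := h H hH ((hL.image _).subset (edgeSet_fromEdgeSet _ ▸ Set.sdiff_subset))
    refine ⟨⟨fun e => C e.1.1, fun {e₁ e₂} hadj => ?_⟩⟩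
    obtain ⟨hne, hv⟩ := lineGraph_adj_iff_exists.1 (L.adj_sub hadj)
    exact (top_adj _ _).2 (hC _ (hmem e₁) _ (hmem e₂) (fun h => hne (Subtype.ext h)) hv)
  obtain ⟨g⟩ := nonempty_hom_of_forall_finite_subgraph_hom fun L hL => (hfin L hL).some
  refine ⟨fun e => if he : e ∈ G.edgeSet then g ⟨e, he⟩ else C₀ e,
    fun e₁ he₁ e₂ he₂ hne hv => ?_⟩
  simp only [dif_pos he₁, dif_pos he₂]
  exact (top_adj _ _).1 <| g.map_adj <|
    lineGraph_adj_iff_exists.2 ⟨fun h => hne (congrArg Subtype.val h), hv⟩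

end SimpleGraph

/-- Vizing's theorem for (possibly infinite) simple graphs: if every vertex has degree at
most `D`, then `G` admits a proper edge colouring with `D + 1` colours. -/
theorem edgeColorable_of_degree_le {V : Type*} (G : SimpleGraph V) (D : ℕ)
    (hdeg : ∀ v : V, (G.neighborSet v).encard ≤ D) :
    G.EdgeColorable (D + 1) :=
  SimpleGraph.EdgeColorable.of_forall_finite fun _ hH hfin =>
    SimpleGraph.edgeColorable_of_finite hfin fun v =>
      (Set.encard_le_encard (SimpleGraph.neighborSet_mono hH v)).trans (hdeg v)
end

section
/- Let α = arctan(1/2) and β = arctan(2) (the two non-right interior angles of the right triangle with legs 1 and 2 and hypotenuse √5, so α + β = π/2). Then for all natural numbers a, b, c, d, e, writing n = a + b + c + d + e, we have a·π + b·(4α) + c·(4β) + d·(2α + π/2) + e·(2β + π/2) ≠ (n − 2)·π (as real numbers). In particular, no simple polygon can have all of its interior angles drawn from the list π, 4α, 4β, 2α + π/2, 2β + π/2, since the interior angles of a simple polygon with n vertices sum to (n−2)π. -/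
/-!
Since `β = π/2 - α`, an angle sum equal to `(n - 2)π` collapses to `4kα = (k - 4)π` for an
integer `k`; `k = 0` is impossible, and otherwise `α/π` would be rational. But `α` is the argument
of `2 + i`, so `qα ∈ ℤπ` with `q ≥ 1` would make `(2 + i)^q` real, whereas modulo 5 (via `i ↦ 3`)
the Gaussian integer `(2 + i)^q` vanishes and its conjugate `(2 - i)^q` does not.
-/

open Real

namespace GaussianInt

theorem im_two_add_I_pow_ne_zero {n : ℕ} (hn : n ≠ 0) : ((⟨2, 1⟩ : GaussianInt) ^ n).im ≠ 0 := by
  intro him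
  have hreal : star ((⟨2, 1⟩ : GaussianInt) ^ n) = (⟨2, 1⟩ : GaussianInt) ^ n := by
    ext
    · exact Zsqrtd.re_star _
    · rw [Zsqrtd.im_star, him, neg_zero]
  -- `3 ^ 2 = -1` in `ZMod 5`; the resulting map kills `2 + i` but not its conjugate `2 - i`.
  let φ : GaussianInt →+* ZMod 5 := Zsqrtd.lift ⟨3, by decide⟩
  have h := congrArg φ hreal
  rw [star_pow, map_pow, map_pow] at h
  have hconj : φ (star ⟨2, 1⟩) = -1 := by decide
  have hzero : φ ⟨2, 1⟩ = 0 := by decide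
  rw [hconj, hzero, zero_pow hn] at h
  have : Fact (1 < 5) := ⟨by norm_num⟩
  exact neg_one_pow_ne_zero n h

end GaussianInt

namespace Complex

theorem two_add_I_eq : (2 + I : ℂ) =
    √5 * (cos (Real.arctan (1 / 2)) + sin (Real.arctan (1 / 2)) * I) := by
  have hsqrt : √(1 + (1 / 2) ^ 2) = √5 / 2 := by
    rw [show (1 + (1 / 2) ^ 2 : ℝ) = 5 / 2 ^ 2 by norm_num, Real.sqrt_div' _ (by norm_num),
      Real.sqrt_sq (by norm_num)]
  have h5 : (√5 : ℂ) ≠ 0 := by exact_mod_cast (Real.sqrt_pos.mpr (by norm_num : (0:ℝ) < 5)).ne'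
  rw [← ofReal_cos, ← ofReal_sin, Real.cos_arctan, Real.sin_arctan, hsqrt]
  push_cast
  field_simp

theorem im_two_add_I_pow (n : ℕ) :
    ((2 + I) ^ n).im = √5 ^ n * Real.sin (n * Real.arctan (1 / 2)) := by
  have hcast : (n : ℂ) * Real.arctan (1 / 2) = ((n * Real.arctan (1 / 2) : ℝ) : ℂ) := by
    push_cast; rfl
  rw [two_add_I_eq, mul_pow, cos_add_sin_mul_I_pow, hcast, ← ofReal_cos, ← ofReal_sin,
    ← ofReal_pow, im_ofReal_mul, add_im, ofReal_im, mul_I_im, ofReal_re, zero_add]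

end Complex

theorem irrational_arctan_half_div_pi : Irrational (arctan (1 / 2) / π) := by
  rintro ⟨q, hq⟩
  have hden : q.den * arctan (1 / 2) = q.num * π := by
    rw [Rat.cast_def] at hq
    field_simp at hq
    linarith
  have him : (((⟨2, 1⟩ : GaussianInt) ^ q.den : GaussianInt) : ℂ).im = 0 := by
    rw [map_pow, GaussianInt.toComplex_def', Int.cast_ofNat, Int.cast_one, one_mul,
      Complex.im_two_add_I_pow, hden, sin_int_mul_pi, mul_zero]
  rw [← GaussianInt.intCast_im] at him
  exact GaussianInt.im_two_add_I_pow_ne_zero q.den_nz (by exact_mod_cast him)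

/-- With `α = arctan (1/2)` and `β = arctan 2`, no multiset of `n = a + b + c + d + e`
angles drawn from the list `π, 4α, 4β, 2α + π/2, 2β + π/2` can total `(n - 2)·π`.
Hence no simple polygon has all its interior angles drawn from this list. -/
theorem no_polygon_angles_from_list (a b c d e : ℕ) :
    let α := Real.arctan (1 / 2)
    let β := Real.arctan 2
    (a : ℝ) * Real.pi + (b : ℝ) * (4 * α) + (c : ℝ) * (4 * β) +
        (d : ℝ) * (2 * α + Real.pi / 2) + (e : ℝ) * (2 * β + Real.pi / 2) ≠
      (((a + b + c + d + e : ℕ) : ℝ) - 2) * Real.pi := by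
  intro α β h
  have hβ : β = π / 2 - α := by
    simp only [α, β, one_div, arctan_inv_of_pos two_pos]
    ring
  set k : ℤ := 2 * b - 2 * c + d - e
  have hk : 4 * k * α = (k - 4) * π := by
    rw [hβ] at h
    push_cast [k] at h ⊢
    linear_combination 2 * h
  have hk0 : k ≠ 0 := by
    rintro hk0
    simp [hk0, pi_ne_zero] at hk
  refine irrational_arctan_half_div_pi.ne_rat ((k - 4) / (4 * k)) ?_
  push_cast
  rw [div_eq_div_iff pi_ne_zero (by positivity), ← hk]
  ring
end
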